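/- Let p be prime, q = p^m, h < m, and 0 <= j <= h. The number of distinct sets of the form N(f) (a coset of a j-dimensional F_p-subspace) arising as root sets of affine p-polynomials f(x) = c + sum_{i=0}^h a_i x^{p^i} with |N(f)| = p^j equals [m choose j]_p * p^{m-j}, i.e., every coset of every j-dimensional subspace arises as such a root set. -/

import Mathlib

/-- Gaussian binomial coefficient (defined via the `q`-Pascal recurrence). -/
def gaussBinom (p : ℕ) : ℕ → ℕ → ℕ
  | _, 0 => 1
  | 0, _+1 => 0
  | n+1, k+1 => gaussBinom p n k + p^(k+1) * gaussBinom p n (k+1)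

/-- Gaussian binomial coefficient with integer lower index (`0` for negative index). -/
def gaussBinomI (p n : ℕ) (k : ℤ) : ℕ := if 0 ≤ k then gaussBinom p n k.toNat else 0

/-!
A `p`-polynomial `L(x) = ∑ aᵢ x^{pⁱ}` is an `𝔽_p`-linear map `F → F`, so the root set of
`c + L` is either empty or a coset of `ker L`. Conversely every `j`-dimensional subspace is the
kernel of a `p`-polynomial of `p`-degree `j`: if `ker L = W`, then
`L(x)^p - L(b)^{p-1} L(x) = ∏_{c ∈ 𝔽_p} (L(x) - c L(b))` has kernel `W + 𝔽_p b`.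
Hence the root sets in question are exactly the cosets of `j`-dimensional subspaces. These are
counted by fibring over their direction: there are `p^{m-j}` cosets of each subspace, and the
number of subspaces is found by grouping linearly independent `j`-tuples by their span.
-/

open Module Submodule Polynomial

section GaussianBinomial

open Finset

theorem prod_range_succ_pow_sub_pow {R : Type*} [CommRing R] (x : R) (n k : ℕ) :
    ∏ i ∈ range (k + 1), (x ^ (n + 1) - x ^ i) =
      (x ^ (n + 1) - 1) * x ^ k * ∏ i ∈ range k, (x ^ n - x ^ i) := by
  have h (i : ℕ) : x ^ (n + 1) - x ^ (i + 1) = x * (x ^ n - x ^ i) := by ring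
  simp only [prod_range_succ', pow_zero, h, prod_mul_distrib, prod_const, card_range]
  ring

theorem gaussBinom_mul_prod_pow_sub_pow (q n k : ℕ) :
    (gaussBinom q n k : ℤ) * ∏ i ∈ range k, ((q : ℤ) ^ k - q ^ i) =
      ∏ i ∈ range k, ((q : ℤ) ^ n - q ^ i) := by
  induction n generalizing k with
  | zero =>
    cases k with
    | zero => simp [gaussBinom]
    | succ k => simp [gaussBinom, prod_range_succ']
  | succ n ih =>
    cases k with
    | zero => simp [gaussBinom]
    | succ k =>
      have h := ih (k + 1)
      rw [prod_range_succ_pow_sub_pow, prod_range_succ] at h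
      rw [prod_range_succ_pow_sub_pow, prod_range_succ_pow_sub_pow, gaussBinom]
      push_cast
      linear_combination
        ((q : ℤ) ^ (k + 1) - 1) * (q : ℤ) ^ k * ih k + (q : ℤ) ^ (k + 1) * h

theorem natCast_prod_pow_sub_pow {q n k : ℕ} (hq : 0 < q) (hk : k ≤ n) :
    ((∏ i : Fin k, (q ^ n - q ^ (i : ℕ)) : ℕ) : ℤ) =
      ∏ i ∈ range k, ((q : ℤ) ^ n - q ^ i) := by
  rw [Fin.prod_univ_eq_prod_range (fun i ↦ q ^ n - q ^ i), Nat.cast_prod]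
  refine prod_congr rfl fun i hi ↦ ?_
  push_cast [Nat.pow_le_pow_right hq ((mem_range.mp hi).trans_le hk).le]
  rfl

end GaussianBinomial

theorem LinearMap.preimage_singleton_eq_image_add_ker {R M M₂ : Type*} [Ring R] [AddCommGroup M]
    [AddCommGroup M₂] [Module R M] [Module R M₂] (f : M →ₗ[R] M₂) (x : M) :
    f ⁻¹' {f x} = (x + ·) '' (LinearMap.ker f : Set M) := by
  ext y
  constructor
  · intro hy
    exact ⟨y - x, by simp_all, add_sub_cancel x y⟩
  · rintro ⟨u, hu, rfl⟩
    simp_all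

section FiniteDimensional

variable {K V : Type*} [Field K] [AddCommGroup V] [Module K V] [FiniteDimensional K V]

def linearIndependentSpanEquiv {k : ℕ} (U : Submodule K V) (hU : finrank K U = k) :
    {s : {s : Fin k → V // LinearIndependent K s} // span K (Set.range s.1) = U} ≃
      {t : Fin k → U // LinearIndependent K t} where
  toFun s := ⟨fun i ↦ ⟨s.1.1 i, s.2.le (subset_span (Set.mem_range_self i))⟩,
    .of_comp U.subtype s.1.2⟩
  invFun t := ⟨⟨U.subtype ∘ t.1, t.2.map' U.subtype (ker_subtype U)⟩, by
    rw [Set.range_comp, span_image, t.2.span_eq_top_of_card_eq_finrank' (by simp [hU]),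
      map_subtype_top]⟩
  left_inv _ := rfl
  right_inv _ := rfl

def linearIndependentEquivSigma (k : ℕ) :
    {s : Fin k → V // LinearIndependent K s} ≃
      Σ U : {U : Submodule K V // finrank K U = k}, {t : Fin k → U.1 // LinearIndependent K t} :=
  (Equiv.sigmaFiberEquiv fun s : {s : Fin k → V // LinearIndependent K s} ↦
      (⟨span K (Set.range s.1), by rw [finrank_span_eq_card s.2, Fintype.card_fin]⟩ :
        {U : Submodule K V // finrank K U = k})).symm.trans <|
    Equiv.sigmaCongrRight fun U ↦
      (Equiv.subtypeEquivRight fun _ ↦ Subtype.ext_iff).trans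
        (linearIndependentSpanEquiv U.1 U.2)

end FiniteDimensional

section FiniteVectorSpace

variable {K V : Type*} [Field K] [AddCommGroup V] [Module K V] [Fintype K] [Finite V]

theorem card_subspaces_mul_card_linearIndependent {k : ℕ} (hk : k ≤ finrank K V) :
    Nat.card {U : Submodule K V // finrank K U = k} *
        ∏ i : Fin k, (Fintype.card K ^ k - Fintype.card K ^ (i : ℕ)) =
      ∏ i : Fin k, (Fintype.card K ^ finrank K V - Fintype.card K ^ (i : ℕ)) := by
  have := Fintype.ofFinite {U : Submodule K V // finrank K U = k}
  rw [← card_linearIndependent hk, Nat.card_congr (linearIndependentEquivSigma k),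
    Nat.card_sigma, Finset.sum_congr rfl fun U _ ↦ by rw [card_linearIndependent U.2.ge, U.2],
    Finset.sum_const, Finset.card_univ, smul_eq_mul, Nat.card_eq_fintype_card]

open Finset in
theorem card_subspaces_finrank_eq (k : ℕ) :
    Nat.card {U : Submodule K V // finrank K U = k} =
      gaussBinom (Fintype.card K) (finrank K V) k := by
  set q := Fintype.card K
  have hq : 1 < q := Fintype.one_lt_card
  have hA : ∏ i ∈ range k, ((q : ℤ) ^ k - q ^ i) ≠ 0 :=
    prod_ne_zero_iff.mpr fun i hi ↦ sub_ne_zero.mpr <|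
      (pow_lt_pow_right₀ (by exact_mod_cast hq) (mem_range.mp hi)).ne'
  have hG := gaussBinom_mul_prod_pow_sub_pow q (finrank K V) k
  rcases le_or_gt k (finrank K V) with hk | hk
  · have h := congrArg (Nat.cast : ℕ → ℤ)
      (card_subspaces_mul_card_linearIndependent (K := K) (V := V) hk)
    rw [Nat.cast_mul, natCast_prod_pow_sub_pow (by omega) le_rfl,
      natCast_prod_pow_sub_pow (by omega) hk, ← hG] at h
    exact_mod_cast mul_right_cancel₀ hA h
  · have : IsEmpty {U : Submodule K V // finrank K U = k} :=
      ⟨fun U ↦ (U.2 ▸ U.1.finrank_le).not_gt hk⟩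
    rw [prod_eq_zero (f := fun i ↦ (q : ℤ) ^ finrank K V - q ^ i) (mem_range.mpr hk)
      (sub_self _)] at hG
    rw [Nat.card_of_isEmpty]
    exact_mod_cast ((mul_eq_zero.mp hG).resolve_right hA).symm

theorem natCard_image_add_submodule (U : Submodule K V) (x : V) :
    Nat.card ((x + ·) '' (U : Set V)) = Fintype.card K ^ finrank K U := by
  rw [Nat.card_image_of_injective (add_right_injective x), SetLike.coe_sort_coe,
    natCard_eq_pow_finrank (K := K), Nat.card_eq_fintype_card]

theorem card_cosets (j : ℕ) :
    Nat.card {S : Set V // ∃ U : Submodule K V, finrank K U = j ∧ ∃ x, S = (x + ·) '' U} =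
      gaussBinom (Fintype.card K) (finrank K V) j * Fintype.card K ^ (finrank K V - j) := by
  let coset : (Σ U : {U : Submodule K V // finrank K U = j}, V ⧸ U.1) → Set V :=
    fun U ↦ U.1.1.mkQ ⁻¹' {U.2}
  have coset_mk (U : Submodule K V) (hU : finrank K U = j) (x : V) :
      coset ⟨⟨U, hU⟩, U.mkQ x⟩ = (x + ·) '' U := by
    simp only [coset, U.mkQ.preimage_singleton_eq_image_add_ker, ker_mkQ]
  have hinj : coset.Injective := by
    rintro ⟨⟨U, hU⟩, y⟩ ⟨⟨U', hU'⟩, y'⟩ h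
    obtain ⟨x, rfl⟩ := U.mkQ_surjective y
    obtain rfl : U'.mkQ x = y' := by
      change x ∈ coset ⟨⟨U', hU'⟩, y'⟩
      rw [← h]
      rfl
    rw [coset_mk, coset_mk] at h
    obtain rfl : U = U' :=
      SetLike.coe_injective (Set.image_injective.mpr (add_right_injective x) h)
    rfl
  have hrange (S : Set V) :
      (∃ U : Submodule K V, finrank K U = j ∧ ∃ x, S = (x + ·) '' U) ↔
        S ∈ Set.range coset := by
    constructor
    · rintro ⟨U, hU, x, rfl⟩
      exact ⟨⟨⟨U, hU⟩, U.mkQ x⟩, coset_mk U hU x⟩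
    · rintro ⟨⟨⟨U, hU⟩, y⟩, rfl⟩
      obtain ⟨x, rfl⟩ := U.mkQ_surjective y
      exact ⟨U, hU, x, coset_mk U hU x⟩
  have := Fintype.ofFinite {U : Submodule K V // finrank K U = j}
  have (U : Submodule K V) : Finite (V ⧸ U) := Finite.of_surjective _ U.mkQ_surjective
  rw [Nat.card_congr (Equiv.subtypeEquivRight hrange), Nat.card_range_of_injective hinj,
    Nat.card_sigma, Finset.sum_congr rfl fun U _ ↦ by
      rw [natCard_eq_pow_finrank (K := K), finrank_quotient, U.2, Nat.card_eq_fintype_card],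
    Finset.sum_const, Finset.card_univ, smul_eq_mul, ← Nat.card_eq_fintype_card,
    card_subspaces_finrank_eq]

end FiniteVectorSpace

section PrimeField

variable (p : ℕ) [Fact p.Prime]

theorem mem_range_algebraMap_iff_pow_eq {F : Type*} [CommRing F] [IsDomain F]
    [Algebra (ZMod p) F] (z : F) : z ∈ Set.range (algebraMap (ZMod p) F) ↔ z ^ p = z := by
  have hp : 1 < p := (Fact.out : p.Prime).one_lt
  let P : (ZMod p)[X] := X ^ p - X
  have hmonic : P.Monic := monic_X_pow_sub (by simpa using hp)
  have hroots : P.roots = Finset.univ.val := by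
    simpa using FiniteField.roots_X_pow_card_sub_X (ZMod p)
  have hcard : Multiset.card P.roots = P.natDegree := by
    rw [hroots, FiniteField.X_pow_card_sub_X_natDegree_eq _ hp]
    simp
  have h := hmonic.roots_map_of_card_eq_natDegree (algebraMap (ZMod p) F) hcard
  have hmem : z ∈ (P.map (algebraMap (ZMod p) F)).roots ↔ z ^ p = z := by
    rw [mem_roots (hmonic.map _).ne_zero]
    simp [P, sub_eq_zero]
  rw [← hmem, ← h, hroots]
  simp

theorem pow_sub_pow_pred_mul_eq_zero_iff {F : Type*} [Field F] [Algebra (ZMod p) F] (y w : F) :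
    y ^ p - w ^ (p - 1) * y = 0 ↔ ∃ c : ZMod p, y = c • w := by
  obtain ⟨k, hk⟩ := Nat.exists_eq_add_one_of_ne_zero (Fact.out : p.Prime).ne_zero
  rcases eq_or_ne w 0 with rfl | hw
  · have : k ≠ 0 := by rintro rfl; exact (Fact.out : p.Prime).ne_one hk
    simp [hk, this]
  have hscale : y ^ p - w ^ (p - 1) * y = w ^ p * ((y / w) ^ p - y / w) := by
    rw [hk, Nat.add_sub_cancel, mul_sub, div_pow, mul_div_cancel₀ _ (pow_ne_zero _ hw),
      pow_succ w, mul_assoc, mul_div_cancel₀ _ hw]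
  calc y ^ p - w ^ (p - 1) * y = 0 ↔ (y / w) ^ p = y / w := by
        rw [hscale, mul_eq_zero, sub_eq_zero]; simp [hw]
    _ ↔ ∃ c : ZMod p, algebraMap (ZMod p) F c = y / w :=
      (mem_range_algebraMap_iff_pow_eq p _).symm
    _ ↔ ∃ c : ZMod p, y = c • w := by simp only [Algebra.smul_def, eq_div_iff hw, eq_comm]

end PrimeField

section LinearizedPolynomial

variable (p : ℕ) [Fact p.Prime] {F : Type*} [Field F] [Algebra (ZMod p) F]

def linearizedMap {n : ℕ} (a : Fin n → F) : F →ₗ[ZMod p] F :=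
  AddMonoidHom.toZModLinearMap p
    { toFun x := ∑ i, a i * x ^ p ^ (i : ℕ)
      map_zero' := by simp [(Fact.out : p.Prime).ne_zero]
      map_add' x y := by
        have := charP_of_injective_algebraMap' (ZMod p) (A := F) p
        simp only [add_pow_char_pow, mul_add, Finset.sum_add_distrib] }

@[simp]
theorem linearizedMap_apply {n : ℕ} (a : Fin n → F) (x : F) :
    linearizedMap p a x = ∑ i, a i * x ^ p ^ (i : ℕ) := rfl

theorem linearizedMap_snoc_zero {n : ℕ} (a : Fin n → F) :
    linearizedMap p (Fin.snoc a 0) = linearizedMap p a := by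
  ext x
  simp [Fin.sum_univ_castSucc]

theorem linearizedMap_cons_zero_pow {n : ℕ} (a : Fin n → F) (x : F) :
    linearizedMap p (Fin.cons 0 fun i ↦ a i ^ p) x = linearizedMap p a x ^ p := by
  have := charP_of_injective_algebraMap' (ZMod p) (A := F) p
  simp [Fin.sum_univ_succ, sum_pow_char, mul_pow, pow_succ, pow_mul]

theorem linearizedMap_sub_smul {n : ℕ} (a b : Fin n → F) (c x : F) :
    linearizedMap p (a - c • b) x = linearizedMap p a x - c * linearizedMap p b x := by
  simp [sub_mul, Finset.sum_sub_distrib, Finset.mul_sum, mul_assoc]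

theorem exists_ker_linearizedMap_eq_span {k : ℕ} (v : Fin k → F) {n : ℕ} (hkn : k ≤ n) :
    ∃ a : Fin (n + 1) → F, LinearMap.ker (linearizedMap p a) = span (ZMod p) (Set.range v) := by
  induction k generalizing n with
  | zero =>
    refine ⟨Pi.single 0 1, ?_⟩
    ext x
    simp [Set.range_eq_empty, Pi.single_apply]
  | succ k ih =>
    obtain ⟨n, rfl⟩ : ∃ n', n = n' + 1 := ⟨n - 1, by omega⟩
    obtain ⟨a, ha⟩ := ih (Fin.tail v) (n := n) (by omega)
    set L := linearizedMap p a
    -- the coefficients of `L(x)^p - L(v 0)^(p-1) * L(x)`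
    refine ⟨(Fin.cons 0 fun i ↦ a i ^ p) - L (v 0) ^ (p - 1) • Fin.snoc a 0, ?_⟩
    ext x
    rw [← Fin.cons_self_tail v, Fin.range_cons, mem_span_insert', ← ha, Fin.cons_zero,
      LinearMap.mem_ker, linearizedMap_sub_smul, linearizedMap_cons_zero_pow,
      linearizedMap_snoc_zero, pow_sub_pow_pred_mul_eq_zero_iff]
    simp only [LinearMap.mem_ker, map_add, map_smul]
    constructor
    · rintro ⟨c, hc⟩
      exact ⟨-c, by rw [hc, neg_smul, add_neg_cancel]⟩
    · rintro ⟨c, hc⟩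
      exact ⟨-c, by rw [neg_smul, eq_neg_of_add_eq_zero_left hc]⟩

theorem exists_ker_linearizedMap_eq (U : Submodule (ZMod p) F) [Module.Finite (ZMod p) U]
    {n : ℕ} (hU : finrank (ZMod p) U ≤ n) :
    ∃ a : Fin (n + 1) → F, LinearMap.ker (linearizedMap p a) = U := by
  let b := Module.finBasis (ZMod p) U
  obtain ⟨a, ha⟩ := exists_ker_linearizedMap_eq_span p (U.subtype ∘ b) hU
  refine ⟨a, ha.trans ?_⟩
  rw [Set.range_comp, span_image, b.span_eq, map_subtype_top]

theorem setOf_add_linearizedMap_eq_zero {n : ℕ} (a : Fin n → F) {c x₀ : F}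
    (hx₀ : c + linearizedMap p a x₀ = 0) :
    {x | c + ∑ i, a i * x ^ p ^ (i : ℕ) = 0} =
      (x₀ + ·) '' (LinearMap.ker (linearizedMap p a) : Set F) := by
  rw [← LinearMap.preimage_singleton_eq_image_add_ker, eq_neg_of_add_eq_zero_left hx₀]
  ext x
  exact neg_add_eq_zero.trans eq_comm

end LinearizedPolynomial

theorem stmt13_general (p m h : ℕ) [Fact p.Prime] (F : Type) [Field F] [Fintype F]
    [Algebra (ZMod p) F] (hcard : Fintype.card F = p ^ m) (j : ℕ) (hj : j ≤ h) :
    (Nat.card {S : Set F //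
        (∃ (c : F) (a : Fin (h+1) → F),
          S = {x : F | c + ∑ i : Fin (h+1), a i * x ^ p ^ (i : ℕ) = 0}) ∧
        Nat.card S = p ^ j} = gaussBinom p m j * p ^ (m - j)) ∧
    (∀ U : Submodule (ZMod p) F, Module.finrank (ZMod p) ↥U = j → ∀ x0 : F,
      ∃ (c : F) (a : Fin (h+1) → F),
        {x : F | c + ∑ i : Fin (h+1), a i * x ^ p ^ (i : ℕ) = 0} =
          (x0 + ·) '' (U : Set F)) := by
  have hp := (Fact.out : p.Prime).one_lt
  have hm : finrank (ZMod p) F = m := by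
    rw [card_eq_pow_finrank (K := ZMod p), ZMod.card] at hcard
    exact Nat.pow_right_injective hp hcard
  have hcoset (U : Submodule (ZMod p) F) (hU : finrank (ZMod p) U = j) (x₀ : F) :
      ∃ (c : F) (a : Fin (h + 1) → F),
        {x : F | c + ∑ i : Fin (h+1), a i * x ^ p ^ (i : ℕ) = 0} =
          (x₀ + ·) '' (U : Set F) := by
    obtain ⟨a, ha⟩ := exists_ker_linearizedMap_eq p U (hU.trans_le hj)
    exact ⟨_, a, ha ▸ setOf_add_linearizedMap_eq_zero p a (neg_add_cancel _)⟩
  refine ⟨?_, hcoset⟩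
  have hcount := card_cosets (K := ZMod p) (V := F) j
  rw [ZMod.card, hm] at hcount
  rw [← hcount]
  refine Nat.card_congr (Equiv.subtypeEquivRight fun S ↦ ⟨?_, ?_⟩)
  · rintro ⟨⟨c, a, rfl⟩, hS⟩
    obtain ⟨x₀, hx₀⟩ :=
      Set.nonempty_coe_sort.mp (Nat.card_pos_iff.mp (hS ▸ pow_pos (by omega) j)).1
    rw [setOf_add_linearizedMap_eq_zero p a hx₀] at hS ⊢
    rw [natCard_image_add_submodule, ZMod.card] at hS
    exact ⟨_, Nat.pow_right_injective hp hS, x₀, rfl⟩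
  · rintro ⟨U, hU, x₀, rfl⟩
    obtain ⟨c, a, hca⟩ := hcoset U hU x₀
    exact ⟨⟨c, a, hca.symm⟩, by rw [natCard_image_add_submodule, ZMod.card, hU]⟩

theorem stmt13 (p m h : ℕ) [Fact p.Prime] (hm : 0 < m) (F : Type) [Field F] [Fintype F]
    [Algebra (ZMod p) F] (hcard : Fintype.card F = p ^ m) (hh : h < m) (j : ℕ) (hj : j ≤ h) :
    (Nat.card {S : Set F //
        (∃ (c : F) (a : Fin (h+1) → F),
          S = {x : F | c + ∑ i : Fin (h+1), a i * x ^ p ^ (i : ℕ) = 0}) ∧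
        Nat.card S = p ^ j} = gaussBinom p m j * p ^ (m - j)) ∧
    (∀ U : Submodule (ZMod p) F, Module.finrank (ZMod p) ↥U = j → ∀ x0 : F,
      ∃ (c : F) (a : Fin (h+1) → F),
        {x : F | c + ∑ i : Fin (h+1), a i * x ^ p ^ (i : ℕ) = 0} =
          (x0 + ·) '' (U : Set F)) :=
  stmt13_general p m h F hcard j hj
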